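/- arXiv:1411.0816 — 2 statements merged into one kernel-verified Lean document; each statement's English description precedes it below -/
import Mathlib

section
/- For any w, B ∈ ℝ³, the map v ↦ v + w × B applied with w = (v⁺+v)/2 defines v⁺ uniquely: for every v ∈ ℝ³ and c ∈ ℝ, the equation v⁺ = v + c • ((v⁺ + v)/2) × B has a unique solution v⁺, since the linear map u ↦ u - (c/2) • u × B is invertible. -/
/-!
Since `u ×₃ B` is orthogonal to `u`, a fixed point `u = a • (u ×₃ B)` has `u ⬝ᵥ u = 0`, so the
linear map `u ↦ u - a • (u ×₃ B)` is injective, hence bijective in finite dimension. The implicit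
update equation is this map with `a = c / 2` applied to `v⁺`, set equal to `v + (c / 2) • (v ×₃ B)`.
-/

open Matrix

section CrossProduct

variable {R : Type*} [Field R] [LinearOrder R] [IsStrictOrderedRing R]

theorem eq_zero_of_eq_smul_cross {a : R} {u B : Fin 3 → R} (h : u = a • crossProduct u B) :
    u = 0 := by
  have hdot : u ⬝ᵥ u = 0 := by
    calc u ⬝ᵥ u = u ⬝ᵥ (a • crossProduct u B) := by rw [← h]
      _ = a * (u ⬝ᵥ crossProduct u B) := dotProduct_smul a u _
      _ = 0 := by rw [dot_self_cross, mul_zero]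
  exact dotProduct_self_eq_zero.mp hdot

theorem bijective_sub_smul_cross (a : R) (B : Fin 3 → R) :
    Function.Bijective (fun u : Fin 3 → R => u - a • crossProduct u B) := by
  let T : (Fin 3 → R) →ₗ[R] (Fin 3 → R) := LinearMap.id - a • (crossProduct (R := R)).flip B
  have hT : ⇑T = fun u => u - a • crossProduct u B := rfl
  have hinj : Function.Injective T := by
    rw [← LinearMap.ker_eq_bot, LinearMap.ker_eq_bot']
    exact fun u hu => eq_zero_of_eq_smul_cross (sub_eq_zero.mp hu)
  rw [← hT]
  exact ⟨hinj, LinearMap.injective_iff_surjective.mp hinj⟩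

end CrossProduct

theorem eq_add_smul_cross_midpoint_iff {R : Type*} [Field R] (c : R) (v w B : Fin 3 → R) :
    w = v + c • crossProduct ((2 : R)⁻¹ • (w + v)) B ↔
      w - (c / 2) • crossProduct w B = v + (c / 2) • crossProduct v B := by
  simp only [map_smul, map_add, LinearMap.smul_apply, LinearMap.add_apply]
  constructor <;> intro h <;> linear_combination (norm := module) h

/-- The linear map `u ↦ u - (c/2) • (u × B)` is bijective, hence the implicit
Boris velocity update `v⁺ = v + c • ((v⁺ + v)/2) × B` has a unique solution. -/
theorem implicit_boris_update_well_defined (c : ℝ) (B : Fin 3 → ℝ) :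
    Function.Bijective (fun u : Fin 3 → ℝ => u - (c / 2) • crossProduct u B) ∧
    ∀ v : Fin 3 → ℝ, ∃! w : Fin 3 → ℝ,
      w = v + c • crossProduct ((2 : ℝ)⁻¹ • (w + v)) B := by
  have hbij := bijective_sub_smul_cross (c / 2) B
  refine ⟨hbij, fun v => ?_⟩
  simpa only [eq_add_smul_cross_midpoint_iff] using
    hbij.existsUnique (v + (c / 2) • crossProduct v B)
end

section
/- The determinant of the linear map u ↦ u - a • (u × B) on ℝ³ equals 1 + a² ‖B‖². -/
open Matrix

variable {R : Type*} [CommRing R]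

theorem toMatrix'_crossProduct_flip (v : Fin 3 → R) :
    LinearMap.toMatrix' (crossProduct.flip v) = !![0, v 2, -v 1; -v 2, 0, v 0; v 1, -v 0, 0] := by
  ext i j
  fin_cases i <;> fin_cases j <;> simp [LinearMap.toMatrix'_apply, cross_apply]

/- For a skew-symmetric `K`, `det (1 - a K) = 1 + a² (sum of principal 2-minors of K)`, since
`tr K = det K = 0`; the principal 2-minors of the cross-product matrix are `v i ^ 2`. -/
theorem det_id_sub_smul_crossProduct_flip (a : R) (v : Fin 3 → R) :
    LinearMap.det (LinearMap.id - a • crossProduct.flip v) = 1 + a ^ 2 * (v ⬝ᵥ v) := by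
  rw [← LinearMap.det_toMatrix', map_sub, map_smul, LinearMap.toMatrix'_id,
    toMatrix'_crossProduct_flip, det_fin_three]
  simp [dotProduct, Fin.sum_univ_three]
  ring

/-- The determinant of the linear map `u ↦ u - a • (u × B)` on `ℝ³` equals
`1 + a² ‖B‖²`. -/
theorem det_boris_map (a : ℝ) (B : EuclideanSpace ℝ (Fin 3)) :
    LinearMap.det
      (LinearMap.id - a • (LinearMap.flip (crossProduct (R := ℝ)) B)) =
      1 + a ^ 2 * ‖B‖ ^ 2 := by
  rw [det_id_sub_smul_crossProduct_flip, EuclideanSpace.real_norm_sq_eq]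
  simp [dotProduct, sq]
end
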